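/- Let l_e ≥ w_e > 0 and l_o ≥ w_o > 0, let N_{c,e}, N_{c,o} ≥ 1 be integers, let BC_e = BC((0,0); l_e, w_e, N_{c,e}), and for y = (x, θ) ∈ ℝ² × ℝ let BC_o(y) = BC(y; l_o, w_o, N_{c,o}). Then the rectangular collision set is contained in the multi-circle collision set: { y ∈ ℝ² × ℝ : Rect(l_e, w_e) ∩ S(y; l_o, w_o) ≠ ∅ } ⊆ { y ∈ ℝ² × ℝ : BC_e ∩ BC_o(y) ≠ ∅ }. -/
import Mathlib


open Real Set

/-- Euclidean norm on `ℝ × ℝ`. -/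
noncomputable def enorm2 (p : ℝ × ℝ) : ℝ := Real.sqrt (p.1 ^ 2 + p.2 ^ 2)

/-- Closed Euclidean ball in `ℝ × ℝ` with center `c` and radius `r`. -/
noncomputable def cball (c : ℝ × ℝ) (r : ℝ) : Set (ℝ × ℝ) := {p | enorm2 (p - c) ≤ r}

/-- Unit heading vector `u(θ) = (cos θ, sin θ)`. -/
noncomputable def uvec (θ : ℝ) : ℝ × ℝ := (Real.cos θ, Real.sin θ)

/-- Rotation of a point of `ℝ × ℝ` by angle `θ` about the origin. -/
noncomputable def rot2 (θ : ℝ) (p : ℝ × ℝ) : ℝ × ℝ :=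
  (Real.cos θ * p.1 - Real.sin θ * p.2, Real.sin θ * p.1 + Real.cos θ * p.2)

/-- Closed axis-aligned rectangle `[−l/2, l/2] × [−w/2, w/2]`. -/
def Rect (l w : ℝ) : Set (ℝ × ℝ) := Set.Icc (-(l / 2)) (l / 2) ×ˢ Set.Icc (-(w / 2)) (w / 2)

/-- Oriented footprint: image of `Rect l w` under rotation by `θ` followed by translation by `x`. -/
noncomputable def footprint (x : ℝ × ℝ) (θ l w : ℝ) : Set (ℝ × ℝ) :=
  (fun p => x + rot2 θ p) '' Rect l w

/-- Common radius of the multi-circle cover. -/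
noncomputable def circRadius (l w : ℝ) (Nc : ℕ) : ℝ :=
  Real.sqrt ((l / (2 * Nc)) ^ 2 + w ^ 2 / 4)

/-- Spacing of the circle centers of the multi-circle cover. -/
noncomputable def circSpacing (l w : ℝ) (Nc : ℕ) : ℝ :=
  2 * Real.sqrt (circRadius l w Nc ^ 2 - w ^ 2 / 4)

/-- Multi-circle cover of the footprint with configuration `(x, θ)`:
`N_c` closed balls of radius `circRadius` centered at `x + L_i • u(θ)` with
`L_i = (2i − N_c − 1) d_c / 2`, `i = 1, …, N_c`. -/
noncomputable def multiCircle (x : ℝ × ℝ) (θ l w : ℝ) (Nc : ℕ) : Set (ℝ × ℝ) :=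
  ⋃ i ∈ Finset.Icc 1 Nc,
    cball (x + ((2 * (i : ℝ) - Nc - 1) * circSpacing l w Nc / 2) • uvec θ)
      (circRadius l w Nc)

lemma circSpacing_eq (l w : ℝ) (hl : 0 ≤ l) (Nc : ℕ) (hNc : 1 ≤ Nc) :
    circSpacing l w Nc = l / Nc := by
  have hsq : circRadius l w Nc ^ 2 = (l / (2 * Nc)) ^ 2 + w ^ 2 / 4 := by
    rw [circRadius, Real.sq_sqrt (by positivity)]
  have hNc' : (0:ℝ) < Nc := by exact_mod_cast Nat.pos_of_ne_zero (by omega)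
  rw [circSpacing, hsq]
  have : (l / (2 * Nc)) ^ 2 + w ^ 2 / 4 - w ^ 2 / 4 = (l / (2 * Nc)) ^ 2 := by ring
  rw [this, Real.sqrt_sq (by positivity)]
  field_simp

lemma exists_center (l : ℝ) (hl : 0 < l) (Nc : ℕ) (hNc : 1 ≤ Nc) (a : ℝ)
    (ha : |a| ≤ l / 2) :
    ∃ i ∈ Finset.Icc 1 Nc, |a - (2 * (i : ℝ) - Nc - 1) * (l / Nc) / 2| ≤ l / (2 * Nc) := by
  have hNc' : (0:ℝ) < Nc := by exact_mod_cast Nat.pos_of_ne_zero (by omega)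
  set t : ℝ := (a + l / 2) * Nc / l with ht
  have ha1 : -(l/2) ≤ a := (abs_le.mp ha).1
  have ha2 : a ≤ l/2 := (abs_le.mp ha).2
  have ht0 : 0 ≤ t := by
    apply div_nonneg _ hl.le
    nlinarith
  have htN : t ≤ Nc := by
    rw [div_le_iff₀ hl]
    nlinarith
  refine ⟨max 1 ⌈t⌉₊, ?_, ?_⟩
  · rw [Finset.mem_Icc]
    constructor
    · exact le_max_left _ _
    · have : ⌈t⌉₊ ≤ Nc := Nat.ceil_le.mpr htN
      omega
  · set i : ℕ := max 1 ⌈t⌉₊ with hi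
    have hbound : (i:ℝ) - 1 ≤ t ∧ t ≤ i := by
      rcases Nat.eq_zero_or_pos ⌈t⌉₊ with h0 | hpos
      · have : t ≤ 0 := by
          by_contra h
          push_neg at h
          have := Nat.ceil_pos.mpr h
          omega
        have ht' : t = 0 := le_antisymm this ht0
        have : i = 1 := by simp [hi, h0]
        rw [this, ht']; norm_num
      · have hieq : i = ⌈t⌉₊ := by omega
        constructor
        · rw [hieq]
          have : (⌈t⌉₊ - 1 : ℕ) < ⌈t⌉₊ := by omega
          have := (Nat.lt_ceil).mp this
          push_cast [Nat.cast_sub hpos] at this ⊢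
          linarith
        · rw [hieq]; exact Nat.le_ceil t
      
    have key : a - (2 * (i : ℝ) - Nc - 1) * (l / Nc) / 2 = (t - i + 1/2) * (l / Nc) := by
      rw [ht]
      field_simp
      ring
    rw [key, abs_mul]
    have h1 : |t - (i:ℝ) + 1/2| ≤ 1/2 := by
      rw [abs_le]; constructor <;> [linarith [hbound.2]; linarith [hbound.1]]
    have h2 : |l / (Nc:ℝ)| = l / Nc := abs_of_nonneg (by positivity)
    rw [h2]
    calc |t - (i:ℝ) + 1/2| * (l / Nc) ≤ (1/2) * (l / Nc) := by
          apply mul_le_mul_of_nonneg_right h1 (by positivity)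
      _ = l / (2 * Nc) := by field_simp

lemma footprint_subset_multiCircle (l w : ℝ) (hw : 0 < w) (hl : w ≤ l)
    (Nc : ℕ) (hNc : 1 ≤ Nc) (x : ℝ × ℝ) (θ : ℝ) :
    footprint x θ l w ⊆ multiCircle x θ l w Nc := by
  rintro q ⟨p, hp, rfl⟩
  obtain ⟨⟨hp11, hp12⟩, hp21, hp22⟩ := hp
  have hl0 : 0 < l := lt_of_lt_of_le hw hl
  obtain ⟨i, hi, habs⟩ := exists_center l hl0 Nc hNc p.1 (abs_le.mpr ⟨hp11, hp12⟩)
  refine Set.mem_biUnion hi ?_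
  show enorm2 _ ≤ _
  rw [circSpacing_eq l w hl0.le Nc hNc]
  set L : ℝ := (2 * (i : ℝ) - Nc - 1) * (l / Nc) / 2 with hL
  have hNc' : (0:ℝ) < Nc := by exact_mod_cast Nat.pos_of_ne_zero (by omega)
  have hveq : (x + rot2 θ p - (x + L • uvec θ)) =
      (Real.cos θ * (p.1 - L) - Real.sin θ * p.2,
       Real.sin θ * (p.1 - L) + Real.cos θ * p.2) := by
    simp only [Prod.ext_iff, rot2, uvec, Prod.smul_def, smul_eq_mul, Prod.fst_sub,
      Prod.snd_sub, Prod.fst_add, Prod.snd_add]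
    constructor <;> ring
  rw [hveq, enorm2, circRadius]
  apply Real.sqrt_le_sqrt
  have hcs : Real.cos θ ^ 2 + Real.sin θ ^ 2 = 1 := by
    rw [add_comm]; exact Real.sin_sq_add_cos_sq θ
  have hexp : (Real.cos θ * (p.1 - L) - Real.sin θ * p.2) ^ 2 +
      (Real.sin θ * (p.1 - L) + Real.cos θ * p.2) ^ 2 = (p.1 - L) ^ 2 + p.2 ^ 2 := by
    nlinarith [hcs]
  rw [hexp]
  have h1 : (p.1 - L) ^ 2 ≤ (l / (2 * Nc)) ^ 2 := by
    have := abs_le.mp habs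
    nlinarith [this.1, this.2]
  have h2 : p.2 ^ 2 ≤ w ^ 2 / 4 := by nlinarith
  linarith

lemma rect_eq_footprint (l w : ℝ) : Rect l w = footprint (0, 0) 0 l w := by
  rw [footprint]
  have : (fun p : ℝ × ℝ => ((0:ℝ), (0:ℝ)) + rot2 0 p) = id := by
    funext p
    simp [rot2, Prod.ext_iff]
  rw [this, Set.image_id]

/-- The set of object configurations for which the rectangular footprints collide is
contained in the set of configurations for which the multi-circle covers collide. -/
theorem rect_collision_set_subset_multiCircle_collision_set
    (le we lo wo : ℝ) (hwe : 0 < we) (hle : we ≤ le) (hwo : 0 < wo) (hlo : wo ≤ lo)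
    (Nce Nco : ℕ) (hNce : 1 ≤ Nce) (hNco : 1 ≤ Nco) :
    {y : (ℝ × ℝ) × ℝ | (Rect le we ∩ footprint y.1 y.2 lo wo).Nonempty} ⊆
      {y : (ℝ × ℝ) × ℝ |
        (multiCircle (0, 0) 0 le we Nce ∩ multiCircle y.1 y.2 lo wo Nco).Nonempty} := by
  rintro y ⟨q, hq1, hq2⟩
  refine ⟨q, ?_, ?_⟩
  · apply footprint_subset_multiCircle le we hwe hle Nce hNce
    rwa [← rect_eq_footprint]
  · exact footprint_subset_multiCircle lo wo hwo hlo Nco hNco y.1 y.2 hq2
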